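/- In the ℓ_1 ⊕ ℓ_2 example, player I has a winning strategy in the 1'st subsequence game (SG)_1 to select from every normalized block sequence a subsequence that is equivalent either to the unit vector basis of ℓ_1 or to the unit vector basis of ℓ_2. -/

import Mathlib

open ENNReal

/-!
STATEMENT 15: In `E = ℓ₁ ⊕ ℓ₂`, player I has a winning strategy in the 1'st
subsequence game `(SG)₁` to select, from every normalized block sequence played
by II, a subsequence equivalent to the unit vector basis of `ℓ₁` or to the unit
vector basis of `ℓ₂`.  In `(SG)₁`, after II's moves `x_0, …, x_{n-1}` player I
announces digits `s_n ∈ {0,1}ⁿ`; at every coordinate the digits must stabilise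
(finitely many oscillations), the eventually selected set of coordinates must
be infinite, and the corresponding subsequence is the outcome.
-/

namespace Stmt15

noncomputable abbrev X := lp (fun _ : ℕ => ℝ) 1
noncomputable abbrev Y := lp (fun _ : ℕ => ℝ) 2
noncomputable abbrev E12 := WithLp 1 (X × Y)

noncomputable def part1 (x : E12) : X := ((WithLp.equiv 1 (X × Y)) x).1
noncomputable def part2 (x : E12) : Y := ((WithLp.equiv 1 (X × Y)) x).2

noncomputable def coordE (x : E12) (i : ℕ) : ℝ :=
  if i % 2 = 1 then part1 x (i / 2) else part2 x (i / 2)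

def NormBlockSeq (x : ℕ → E12) : Prop :=
  (∀ n, ‖x n‖ = 1) ∧
  ∃ N : ℕ → ℕ, Monotone N ∧
    ∀ n i, coordE (x n) i ≠ 0 → N n ≤ i ∧ i < N (n + 1)

def hist (x : ℕ → E12) (n : ℕ) : List E12 := List.ofFn fun i : Fin n => x i

/-- The set of coordinates eventually selected by the strategy `σ` along the
play `x`. -/
def selected (σ : List E12 → ℕ → Bool) (x : ℕ → E12) : Set ℕ :=
  {k | ∃ N, k < N ∧ ∀ n ≥ N, σ (hist x n) k = true}

def SeqEquiv {F G : Type*} [NormedAddCommGroup F] [NormedSpace ℝ F]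
    [NormedAddCommGroup G] [NormedSpace ℝ G] (x : ℕ → F) (y : ℕ → G) : Prop :=
  ∃ C : ℝ, 0 < C ∧ ∀ (s : Finset ℕ) (a : ℕ → ℝ),
    ‖∑ i ∈ s, a i • x i‖ ≤ C * ‖∑ i ∈ s, a i • y i‖ ∧
    ‖∑ i ∈ s, a i • y i‖ ≤ C * ‖∑ i ∈ s, a i • x i‖

end Stmt15

open Stmt15

namespace S15

lemma norm_X_eq (f : X) : ‖f‖ = ∑' i, ‖f i‖ := by
  have := lp.norm_eq_tsum_rpow (p := 1) (E := fun _ : ℕ => ℝ) (by simp) f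
  simpa using this

lemma summable_X (f : X) : Summable (fun i => ‖f i‖) := by
  have := (lp.memℓp f).summable (p := 1) (by simp)
  simpa using this

lemma X_norm_add_disj (f g : X) (h : ∀ i, f i = 0 ∨ g i = 0) : ‖f + g‖ = ‖f‖ + ‖g‖ := by
  rw [norm_X_eq, norm_X_eq, norm_X_eq, ← Summable.tsum_add (summable_X f) (summable_X g)]
  congr 1
  funext i
  have h2 : (f + g) i = f i + g i := by
    rw [lp.coeFn_add]; rfl
  rcases h i with h0 | h0 <;> simp [h2, h0]

lemma X_norm_sum (s : Finset ℕ) (u : ℕ → X)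
    (h : ∀ j ∈ s, ∀ j' ∈ s, j ≠ j' → ∀ i, u j i = 0 ∨ u j' i = 0) :
    ‖∑ j ∈ s, u j‖ = ∑ j ∈ s, ‖u j‖ := by
  classical
  induction s using Finset.induction_on with
  | empty => simp
  | @insert j s hj ih =>
    rw [Finset.sum_insert hj, Finset.sum_insert hj,
      X_norm_add_disj _ _ ?_, ih ?_]
    · intro j' hj' j'' hj'' hne i
      exact h j' (Finset.mem_insert_of_mem hj') j'' (Finset.mem_insert_of_mem hj'') hne i
    · intro i
      by_cases h0 : u j i = 0
      · exact Or.inl h0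
      · right
        have hsum : (↑(∑ j' ∈ s, u j') : ∀ i, ℝ) i = ∑ j' ∈ s, u j' i := by
          rw [lp.coeFn_sum]; simp
        rw [hsum]
        refine Finset.sum_eq_zero fun j' hj' => ?_
        rcases h j (Finset.mem_insert_self j s) j' (Finset.mem_insert_of_mem hj')
          (fun hh => hj (hh ▸ hj')) i with h1 | h1
        · exact absurd h1 h0
        · exact h1

lemma Y_inner_eq (f g : Y) : (inner ℝ f g : ℝ) = ∑' i, f i * g i := by
  rw [lp.inner_eq_tsum]
  congr 1; funext i; simp [mul_comm]

lemma Y_inner_disj (f g : Y) (h : ∀ i, f i = 0 ∨ g i = 0) : (inner ℝ f g : ℝ) = 0 := by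
  rw [Y_inner_eq]
  have : ∀ i, f i * g i = 0 := fun i => by rcases h i with h0 | h0 <;> simp [h0]
  simp [this]

lemma Y_norm_sum_sq (s : Finset ℕ) (w : ℕ → Y)
    (h : ∀ j ∈ s, ∀ j' ∈ s, j ≠ j' → ∀ i, w j i = 0 ∨ w j' i = 0) :
    ‖∑ j ∈ s, w j‖ ^ 2 = ∑ j ∈ s, ‖w j‖ ^ 2 := by
  classical
  rw [← real_inner_self_eq_norm_sq, sum_inner]
  refine Finset.sum_congr rfl fun j hj => ?_
  rw [inner_sum]
  rw [Finset.sum_eq_single j]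
  · exact real_inner_self_eq_norm_sq _
  · intro j' hj' hne
    exact Y_inner_disj _ _ (h j hj j' hj' (fun hh => hne (hh ▸ rfl))) |>.symm ▸
      (Y_inner_disj _ _ (h j hj j' hj' fun hh => hne hh.symm))
  · intro hjj; exact absurd hj hjj

lemma E_norm (v : E12) : ‖v‖ = ‖part1 v‖ + ‖part2 v‖ := by
  have := WithLp.prod_norm_eq_add (p := 1) (by simp) v
  simpa [part1, part2] using this

lemma part1_add (v w : E12) : part1 (v + w) = part1 v + part1 w := rfl
lemma part2_add (v w : E12) : part2 (v + w) = part2 v + part2 w := rfl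
lemma part1_smul (a : ℝ) (v : E12) : part1 (a • v) = a • part1 v := rfl
lemma part2_smul (a : ℝ) (v : E12) : part2 (a • v) = a • part2 v := rfl
lemma part1_zero : part1 0 = 0 := rfl
lemma part2_zero : part2 0 = 0 := rfl

lemma part1_sum (s : Finset ℕ) (f : ℕ → E12) :
    part1 (∑ j ∈ s, f j) = ∑ j ∈ s, part1 (f j) := by
  classical
  induction s using Finset.induction_on with
  | empty => simp [part1_zero]
  | @insert j s hj ih => simp [Finset.sum_insert hj, part1_add, ih]

lemma part2_sum (s : Finset ℕ) (f : ℕ → E12) :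
    part2 (∑ j ∈ s, f j) = ∑ j ∈ s, part2 (f j) := by
  classical
  induction s using Finset.induction_on with
  | empty => simp [part2_zero]
  | @insert j s hj ih => simp [Finset.sum_insert hj, part2_add, ih]

lemma part1_coord (v : E12) (t : ℕ) : part1 v t = coordE v (2 * t + 1) := by
  have h1 : (2 * t + 1) % 2 = 1 := by omega
  have h2 : (2 * t + 1) / 2 = t := by omega
  simp [coordE, h1, h2]

lemma part2_coord (v : E12) (t : ℕ) : part2 v t = coordE v (2 * t) := by
  have h1 : ¬ (2 * t) % 2 = 1 := by omega
  have h2 : (2 * t) / 2 = t := by omega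
  simp [coordE, h1, h2]

lemma blocks_disj {x : ℕ → E12} (hx : NormBlockSeq x) {n m : ℕ} (h : n ≠ m) (i : ℕ) :
    coordE (x n) i = 0 ∨ coordE (x m) i = 0 := by
  obtain ⟨-, N, hN, hsupp⟩ := hx
  by_contra hc
  push_neg at hc
  obtain ⟨h1, h2⟩ := hc
  obtain ⟨hn1, hn2⟩ := hsupp n i h1
  obtain ⟨hm1, hm2⟩ := hsupp m i h2
  rcases Nat.lt_or_ge n m with hnm | hnm
  · exact absurd (lt_of_lt_of_le hn2 (le_trans (hN hnm) hm1)) (lt_irrefl i)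
  · have hmn : m < n := by omega
    exact absurd (lt_of_lt_of_le hm2 (le_trans (hN hmn) hn1)) (lt_irrefl i)


lemma part_disj1 {x : ℕ → E12} (hx : NormBlockSeq x) {n m : ℕ} (h : n ≠ m) (t : ℕ) :
    part1 (x n) t = 0 ∨ part1 (x m) t = 0 := by
  rw [part1_coord, part1_coord]; exact blocks_disj hx h _

lemma part_disj2 {x : ℕ → E12} (hx : NormBlockSeq x) {n m : ℕ} (h : n ≠ m) (t : ℕ) :
    part2 (x n) t = 0 ∨ part2 (x m) t = 0 := by
  rw [part2_coord, part2_coord]; exact blocks_disj hx h _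

lemma norm_comb {x : ℕ → E12} (hx : NormBlockSeq x) {φ : ℕ → ℕ}
    (hφ : Function.Injective φ) (s : Finset ℕ) (a : ℕ → ℝ) :
    ‖∑ j ∈ s, a j • x (φ j)‖
      = (∑ j ∈ s, |a j| * ‖part1 (x (φ j))‖)
        + Real.sqrt (∑ j ∈ s, (a j) ^ 2 * ‖part2 (x (φ j))‖ ^ 2) := by
  have h1 : part1 (∑ j ∈ s, a j • x (φ j)) = ∑ j ∈ s, a j • part1 (x (φ j)) := by
    rw [part1_sum]; exact Finset.sum_congr rfl fun j _ => part1_smul _ _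
  have h2 : part2 (∑ j ∈ s, a j • x (φ j)) = ∑ j ∈ s, a j • part2 (x (φ j)) := by
    rw [part2_sum]; exact Finset.sum_congr rfl fun j _ => part2_smul _ _
  rw [E_norm, h1, h2]
  have hd1 : ∀ j ∈ s, ∀ j' ∈ s, j ≠ j' → ∀ i,
      (a j • part1 (x (φ j))) i = 0 ∨ (a j' • part1 (x (φ j'))) i = 0 := by
    intro j _ j' _ hne i
    have hs : ∀ (b : ℝ) (f : X), (b • f) i = b • f i := fun b f => by
      rw [lp.coeFn_smul]; rfl
    rw [hs, hs]
    rcases part_disj1 hx (fun hh => hne (hφ hh)) i with h0 | h0 <;> simp [h0]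
  have hd2 : ∀ j ∈ s, ∀ j' ∈ s, j ≠ j' → ∀ i,
      (a j • part2 (x (φ j))) i = 0 ∨ (a j' • part2 (x (φ j'))) i = 0 := by
    intro j _ j' _ hne i
    have hs : ∀ (b : ℝ) (f : Y), (b • f) i = b • f i := fun b f => by
      rw [lp.coeFn_smul]; rfl
    rw [hs, hs]
    rcases part_disj2 hx (fun hh => hne (hφ hh)) i with h0 | h0 <;> simp [h0]
  rw [X_norm_sum s _ hd1]
  have hY : ‖∑ j ∈ s, a j • part2 (x (φ j))‖ ^ 2
      = ∑ j ∈ s, (a j) ^ 2 * ‖part2 (x (φ j))‖ ^ 2 := by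
    rw [Y_norm_sum_sq s _ hd2]
    exact Finset.sum_congr rfl fun j _ => by
      rw [norm_smul, mul_pow, Real.norm_eq_abs, sq_abs]
  rw [← hY, Real.sqrt_sq (norm_nonneg _)]
  congr 1
  exact Finset.sum_congr rfl fun j _ => by rw [norm_smul, Real.norm_eq_abs]

lemma smul_single (p : ℝ≥0∞) (i : ℕ) (a : ℝ) :
    a • (lp.single p i (1 : ℝ) : lp (fun _ : ℕ => ℝ) p) = lp.single p i a := by
  apply lp.ext
  funext j
  have h1 : (↑(a • (lp.single p i (1 : ℝ) : lp (fun _ : ℕ => ℝ) p)) : ∀ _ : ℕ, ℝ) j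
      = a • ((lp.single p i (1 : ℝ) : lp (fun _ : ℕ => ℝ) p) j) := by
    rw [lp.coeFn_smul]; rfl
  rw [h1]
  by_cases h : j = i
  · subst h; rw [lp.single_apply_self, lp.single_apply_self]; simp
  · rw [lp.single_apply_ne _ _ _ h, lp.single_apply_ne _ _ _ h]; simp

lemma norm_l1_target (s : Finset ℕ) (a : ℕ → ℝ) :
    ‖∑ i ∈ s, a i • (lp.single 1 i (1 : ℝ) : X)‖ = ∑ i ∈ s, |a i| := by
  have h := lp.norm_sum_single (p := 1) (E := fun _ : ℕ => ℝ) (by simp) a s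
  simp only [ENNReal.toReal_one, Real.rpow_one] at h
  calc ‖∑ i ∈ s, a i • (lp.single 1 i (1 : ℝ) : X)‖
      = ‖∑ i ∈ s, (lp.single 1 i (a i) : X)‖ := by
        congr 1; exact Finset.sum_congr rfl fun i _ => smul_single 1 i (a i)
    _ = ∑ i ∈ s, |a i| := by rw [h]; simp [Real.norm_eq_abs]

lemma norm_l2_target (s : Finset ℕ) (a : ℕ → ℝ) :
    ‖∑ i ∈ s, a i • (lp.single 2 i (1 : ℝ) : Y)‖ = Real.sqrt (∑ i ∈ s, (a i) ^ 2) := by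
  have hS : (∑ i ∈ s, a i • (lp.single 2 i (1 : ℝ) : Y)) = ∑ i ∈ s, (lp.single 2 i (a i) : Y) :=
    Finset.sum_congr rfl fun i _ => smul_single 2 i (a i)
  rw [hS]
  have h := lp.norm_sum_single (p := 2) (E := fun _ : ℕ => ℝ) (by norm_num) a s
  rw [show ((2 : ℝ≥0∞)).toReal = ((2 : ℕ) : ℝ) by norm_num] at h
  rw [Real.rpow_natCast] at h
  simp only [Real.rpow_natCast] at h
  have key : ‖∑ i ∈ s, (lp.single 2 i (a i) : Y)‖ ^ (2 : ℕ) = ∑ i ∈ s, (a i) ^ (2 : ℕ) := by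
    rw [h]; exact Finset.sum_congr rfl fun i _ => by rw [Real.norm_eq_abs, sq_abs]
  rw [← key, Real.sqrt_sq (norm_nonneg _)]


lemma parts_sum_one {x : ℕ → E12} (hx : NormBlockSeq x) (n : ℕ) :
    ‖part1 (x n)‖ + ‖part2 (x n)‖ = 1 := by
  rw [← E_norm]; exact hx.1 n

lemma seqequiv_l2 {x : ℕ → E12} {φ : ℕ → ℕ} (hx : NormBlockSeq x)
    (hφ : Function.Injective φ)
    (hlam : ∀ j, ‖part1 (x (φ j))‖ ≤ 1 / 2)
    (hsum : ∀ s : Finset ℕ, ∑ j ∈ s, ‖part1 (x (φ j))‖ ^ 2 ≤ 1) :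
    SeqEquiv (fun j => x (φ j)) (fun i => (lp.single 2 i (1 : ℝ) : Y)) := by
  refine ⟨2, by norm_num, fun s a => ?_⟩
  set L : ℕ → ℝ := fun j => ‖part1 (x (φ j))‖ with hL
  set M : ℕ → ℝ := fun j => ‖part2 (x (φ j))‖ with hM
  have hLM : ∀ j, L j + M j = 1 := fun j => parts_sum_one hx (φ j)
  have hL0 : ∀ j, 0 ≤ L j := fun j => norm_nonneg _
  have hM0 : ∀ j, 0 ≤ M j := fun j => norm_nonneg _
  have hM1 : ∀ j, M j ≤ 1 := fun j => by have := hLM j; have := hL0 j; linarith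
  have hMhalf : ∀ j, 1 / 2 ≤ M j := fun j => by
    have := hLM j; have := hlam j; linarith
  have hBN : ‖∑ j ∈ s, a j • x (φ j)‖
      = (∑ j ∈ s, |a j| * L j) + Real.sqrt (∑ j ∈ s, (a j) ^ 2 * M j ^ 2) :=
    norm_comb hx hφ s a
  have hT : ‖∑ i ∈ s, a i • (lp.single 2 i (1 : ℝ) : Y)‖ = Real.sqrt (∑ i ∈ s, (a i) ^ 2) :=
    norm_l2_target s a
  simp only
  rw [hBN, hT]
  set S1 := ∑ j ∈ s, |a j| * L j with hS1
  set S2 := ∑ j ∈ s, (a j) ^ 2 * M j ^ 2 with hS2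
  set A := ∑ i ∈ s, (a i) ^ 2 with hA
  have hA0 : 0 ≤ A := Finset.sum_nonneg fun i _ => sq_nonneg _
  have hS10 : 0 ≤ S1 := Finset.sum_nonneg fun i _ => by positivity
  have hS20 : 0 ≤ S2 := Finset.sum_nonneg fun i _ => by positivity
  have h1 : S1 ≤ Real.sqrt A := by
    have hcs := Real.sum_mul_le_sqrt_mul_sqrt s (fun j => |a j|) L
    simp only [sq_abs] at hcs
    have hL2 : Real.sqrt (∑ j ∈ s, L j ^ 2) ≤ 1 := by
      rw [show (1 : ℝ) = Real.sqrt 1 by rw [Real.sqrt_one]]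
      exact Real.sqrt_le_sqrt (hsum s)
    calc S1 ≤ Real.sqrt A * Real.sqrt (∑ j ∈ s, L j ^ 2) := hcs
      _ ≤ Real.sqrt A * 1 := by
          exact mul_le_mul_of_nonneg_left hL2 (Real.sqrt_nonneg _)
      _ = Real.sqrt A := mul_one _
  have h2 : Real.sqrt S2 ≤ Real.sqrt A := by
    apply Real.sqrt_le_sqrt
    apply Finset.sum_le_sum
    intro i _
    calc a i ^ 2 * M i ^ 2 ≤ a i ^ 2 * 1 :=
          mul_le_mul_of_nonneg_left (by simpa using pow_le_pow_left₀ (hM0 i) (hM1 i) 2)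
            (sq_nonneg _)
      _ = a i ^ 2 := mul_one _
  have h3 : Real.sqrt A ≤ 2 * Real.sqrt S2 := by
    have hq : A ≤ 4 * S2 := by
      rw [hA, hS2, Finset.mul_sum]
      apply Finset.sum_le_sum
      intro i _
      have hm : (1 : ℝ) / 4 ≤ M i ^ 2 := by nlinarith [hMhalf i, hM0 i]
      nlinarith [mul_le_mul_of_nonneg_left hm (sq_nonneg (a i))]
    calc Real.sqrt A ≤ Real.sqrt (4 * S2) := Real.sqrt_le_sqrt hq
      _ = 2 * Real.sqrt S2 := by
          rw [show (4 : ℝ) = 2 ^ 2 by norm_num, Real.sqrt_mul (by positivity), Real.sqrt_sq (by norm_num : (0:ℝ) ≤ 2)]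
  constructor
  · have := Real.sqrt_nonneg S2; linarith
  · have := Real.sqrt_nonneg S2; linarith

set_option maxHeartbeats 1000000 in
lemma seqequiv_l1 {x : ℕ → E12} {φ : ℕ → ℕ} (hx : NormBlockSeq x)
    (hφ : Function.Injective φ) (P : ℕ → Prop) [DecidablePred P] (k : ℕ)
    (hP : ∀ j, P j → ‖part1 (x (φ j))‖ ≤ 1 / 2)
    (hbig : ∀ j, P j ∨ (1 / 2 : ℝ) ^ (k + 1) ≤ ‖part1 (x (φ j))‖)
    (hcard : ∀ s : Finset ℕ, (s.filter P).card ≤ k) :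
    SeqEquiv (fun j => x (φ j)) (fun i => (lp.single 1 i (1 : ℝ) : X)) := by
  set C : ℝ := (2 : ℝ) ^ (k + 1) + 2 * k + 1 with hCdef
  have hC1 : (1 : ℝ) ≤ C := by
    have h2k : (1 : ℝ) ≤ (2 : ℝ) ^ (k + 1) := one_le_pow₀ (by norm_num)
    have hk0 : (0 : ℝ) ≤ (k : ℝ) := Nat.cast_nonneg k
    rw [hCdef]; linarith
  refine ⟨C, by positivity, fun s a => ?_⟩
  set L : ℕ → ℝ := fun j => ‖part1 (x (φ j))‖ with hL
  set M : ℕ → ℝ := fun j => ‖part2 (x (φ j))‖ with hM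
  have hLM : ∀ j, L j + M j = 1 := fun j => parts_sum_one hx (φ j)
  have hL0 : ∀ j, 0 ≤ L j := fun j => norm_nonneg _
  have hM0 : ∀ j, 0 ≤ M j := fun j => norm_nonneg _
  have hMhalf : ∀ j, P j → 1 / 2 ≤ M j := fun j hj => by
    have := hLM j; have := hP j hj; linarith
  have hBN : ‖∑ j ∈ s, a j • x (φ j)‖
      = (∑ j ∈ s, |a j| * L j) + Real.sqrt (∑ j ∈ s, (a j) ^ 2 * M j ^ 2) :=
    norm_comb hx hφ s a
  have hT : ‖∑ i ∈ s, a i • (lp.single 1 i (1 : ℝ) : X)‖ = ∑ i ∈ s, |a i| :=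
    norm_l1_target s a
  simp only
  rw [hBN, hT]
  set S1 := ∑ j ∈ s, |a j| * L j with hS1
  set S2 := ∑ j ∈ s, (a j) ^ 2 * M j ^ 2 with hS2
  set T := ∑ i ∈ s, |a i| with hTd
  have hT0 : 0 ≤ T := Finset.sum_nonneg fun i _ => abs_nonneg _
  have hS10 : 0 ≤ S1 := Finset.sum_nonneg fun i _ => by positivity
  have hS20 : 0 ≤ S2 := Finset.sum_nonneg fun i _ => by positivity
  have hBT : S1 + Real.sqrt S2 ≤ T := by
    have hs2 : Real.sqrt S2 ≤ ∑ j ∈ s, |a j| * M j := by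
      have hrw : S2 = ∑ j ∈ s, (|a j| * M j) ^ 2 := by
        apply Finset.sum_congr rfl
        intro i _
        rw [mul_pow, sq_abs]
      have hsq : ∑ j ∈ s, (|a j| * M j) ^ 2 ≤ (∑ j ∈ s, |a j| * M j) ^ 2 :=
        Finset.sum_sq_le_sq_sum_of_nonneg fun i _ => by positivity
      calc Real.sqrt S2 ≤ Real.sqrt ((∑ j ∈ s, |a j| * M j) ^ 2) := by
            rw [hrw]; exact Real.sqrt_le_sqrt hsq
        _ = ∑ j ∈ s, |a j| * M j := Real.sqrt_sq (Finset.sum_nonneg fun i _ => by positivity)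
    have : S1 + ∑ j ∈ s, |a j| * M j = T := by
      rw [hS1, ← Finset.sum_add_distrib, hTd]
      apply Finset.sum_congr rfl
      intro i _
      rw [← mul_add, hLM i, mul_one]
    linarith
  have hTB : T ≤ C * (S1 + Real.sqrt S2) := by
    have hsplit : T = (∑ j ∈ s.filter P, |a j|) + ∑ j ∈ s.filter (fun j => ¬ P j), |a j| :=
      (Finset.sum_filter_add_sum_filter_not s P _).symm
    have hbig' : ∑ j ∈ s.filter (fun j => ¬ P j), |a j| ≤ (2 : ℝ) ^ (k + 1) * S1 := by
      have step : ∀ j ∈ s.filter (fun j => ¬ P j), |a j| ≤ (2 : ℝ) ^ (k + 1) * (|a j| * L j) := by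
        intro j hj
        rw [Finset.mem_filter] at hj
        rcases hbig j with hPj | hLj
        · exact absurd hPj hj.2
        · have h2 : (1 : ℝ) = (2 : ℝ) ^ (k + 1) * (1 / 2 : ℝ) ^ (k + 1) := by
            rw [← mul_pow]; norm_num
          calc |a j| = (2 : ℝ) ^ (k + 1) * ((1 / 2 : ℝ) ^ (k + 1) * |a j|) := by
                rw [← mul_assoc, ← h2, one_mul]
            _ ≤ (2 : ℝ) ^ (k + 1) * (|a j| * L j) := by
                apply mul_le_mul_of_nonneg_left _ (by positivity)
                rw [mul_comm ((1 / 2 : ℝ) ^ (k + 1)) (|a j|)]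
                exact mul_le_mul_of_nonneg_left hLj (abs_nonneg _)
      calc ∑ j ∈ s.filter (fun j => ¬ P j), |a j|
          ≤ ∑ j ∈ s.filter (fun j => ¬ P j), (2 : ℝ) ^ (k + 1) * (|a j| * L j) :=
            Finset.sum_le_sum step
        _ = (2 : ℝ) ^ (k + 1) * ∑ j ∈ s.filter (fun j => ¬ P j), |a j| * L j := by
            rw [Finset.mul_sum]
        _ ≤ (2 : ℝ) ^ (k + 1) * S1 := by
            apply mul_le_mul_of_nonneg_left _ (by positivity)
            exact Finset.sum_le_sum_of_subset_of_nonneg (Finset.filter_subset _ _)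
              (fun i _ _ => by positivity)
    have hsmall' : ∑ j ∈ s.filter P, |a j| ≤ 2 * k * Real.sqrt S2 := by
      have step : ∀ j ∈ s.filter P, |a j| ≤ 2 * Real.sqrt S2 := by
        intro j hj
        rw [Finset.mem_filter] at hj
        have hterm : (a j) ^ 2 * M j ^ 2 ≤ S2 :=
          Finset.single_le_sum (f := fun j => (a j) ^ 2 * M j ^ 2)
            (fun i _ => by positivity) hj.1
        have h1 : |a j| * M j ≤ Real.sqrt S2 := by
          have : (|a j| * M j) ^ 2 ≤ S2 := by rw [mul_pow, sq_abs]; exact hterm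
          calc |a j| * M j = Real.sqrt ((|a j| * M j) ^ 2) :=
                (Real.sqrt_sq (by positivity)).symm
            _ ≤ Real.sqrt S2 := Real.sqrt_le_sqrt this
        have h2 := hMhalf j hj.2
        nlinarith [abs_nonneg (a j)]
      calc ∑ j ∈ s.filter P, |a j| ≤ (s.filter P).card • (2 * Real.sqrt S2) :=
            Finset.sum_le_card_nsmul _ _ _ step
        _ = ((s.filter P).card : ℝ) * (2 * Real.sqrt S2) := by
            rw [nsmul_eq_mul]
        _ ≤ (k : ℝ) * (2 * Real.sqrt S2) := by
            apply mul_le_mul_of_nonneg_right _ (by positivity)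
            exact_mod_cast hcard s
        _ = 2 * k * Real.sqrt S2 := by ring
    have hsq0 := Real.sqrt_nonneg S2
    calc T ≤ (2 : ℝ) ^ (k + 1) * S1 + 2 * k * Real.sqrt S2 := by
          rw [hsplit]; linarith
      _ ≤ C * (S1 + Real.sqrt S2) := by
          have e1 : (0 : ℝ) ≤ (2 : ℝ) ^ (k + 1) * Real.sqrt S2 := by positivity
          have e2 : (0 : ℝ) ≤ 2 * (k : ℝ) * S1 := by positivity
          rw [hCdef]
          nlinarith [e1, e2, hS10, hsq0]
  constructor
  · calc (∑ j ∈ s, |a j| * L j) + Real.sqrt S2 ≤ T := hBT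
      _ ≤ C * T := le_mul_of_one_le_left hT0 hC1
  · exact hTB

noncomputable def lamv (v : E12) : ℝ := ‖part1 v‖

noncomputable def scntL (l : List E12) : ℕ → ℕ
  | 0 => 0
  | n + 1 => scntL l n + (if lamv (l.getD n 0) < (1 / 2 : ℝ) ^ (scntL l n + 1) then 1 else 0)

def isSmallL (l : List E12) (n : ℕ) : Prop :=
  lamv (l.getD n 0) < (1 / 2 : ℝ) ^ (scntL l n + 1)

open Classical in
noncomputable def strat : List E12 → ℕ → Bool := fun l k =>
  decide (k < l.length ∧ (isSmallL l k ∨ ∀ m, m < l.length → k < m → ¬ isSmallL l m))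

noncomputable def scntX (x : ℕ → E12) : ℕ → ℕ
  | 0 => 0
  | n + 1 => scntX x n + (if lamv (x n) < (1 / 2 : ℝ) ^ (scntX x n + 1) then 1 else 0)

def smallX (x : ℕ → E12) (n : ℕ) : Prop :=
  lamv (x n) < (1 / 2 : ℝ) ^ (scntX x n + 1)

noncomputable instance smallX.dec (x : ℕ → E12) (n : ℕ) : Decidable (smallX x n) := by
  unfold smallX; infer_instance

lemma hist_length (x : ℕ → E12) (n : ℕ) : (hist x n).length = n := by
  simp [hist]

lemma hist_getD {x : ℕ → E12} {n m : ℕ} (h : m < n) : (hist x n).getD m 0 = x m := by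
  have hlen : m < (hist x n).length := by rwa [hist_length]
  rw [List.getD_eq_getElem _ _ hlen]
  simp [hist]

lemma scnt_agree (x : ℕ → E12) (n : ℕ) : ∀ m, m ≤ n → scntL (hist x n) m = scntX x m := by
  intro m
  induction m with
  | zero => intro _; rfl
  | succ m ih =>
    intro hm
    have h1 : m ≤ n := le_trans (Nat.le_succ m) hm
    have h2 : m < n := hm
    rw [scntL, scntX, ih h1, hist_getD h2]

lemma isSmall_agree {x : ℕ → E12} {n m : ℕ} (h : m < n) :
    isSmallL (hist x n) m ↔ smallX x m := by
  unfold isSmallL smallX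
  rw [hist_getD h, scnt_agree x n m (le_of_lt h)]

lemma strat_eval {x : ℕ → E12} {n k : ℕ} (hk : k < n) :
    strat (hist x n) k = true ↔ (smallX x k ∨ ∀ m, m < n → k < m → ¬ smallX x m) := by
  unfold strat
  simp only [decide_eq_true_eq, hist_length]
  constructor
  · rintro ⟨-, hor⟩
    rcases hor with hsm | hall
    · exact Or.inl ((isSmall_agree hk).1 hsm)
    · exact Or.inr fun m hm hkm hsm => hall m hm hkm ((isSmall_agree hm).2 hsm)
  · intro hor
    refine ⟨hk, ?_⟩
    rcases hor with hsm | hall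
    · exact Or.inl ((isSmall_agree hk).2 hsm)
    · exact Or.inr fun m hm hkm hsm => hall m hm hkm ((isSmall_agree hm).1 hsm)

lemma scntX_succ (x : ℕ → E12) (n : ℕ) :
    scntX x (n + 1) = scntX x n + (if smallX x n then 1 else 0) := rfl

lemma scntX_mono (x : ℕ → E12) : Monotone (scntX x) := by
  apply monotone_nat_of_le_succ
  intro n
  rw [scntX_succ]
  split_ifs <;> omega

lemma scntX_lt_of_small {x : ℕ → E12} {m n : ℕ} (h : m < n) (hs : smallX x m) :
    scntX x m < scntX x n := by
  have h1 : scntX x (m + 1) = scntX x m + 1 := by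
    rw [scntX_succ, if_pos hs]
  have h2 : scntX x (m + 1) ≤ scntX x n := scntX_mono x h
  omega

open Classical in
lemma scntX_eq_card (x : ℕ → E12) (n : ℕ) :
    scntX x n = ((Finset.range n).filter (fun m => smallX x m)).card := by
  induction n with
  | zero => simp [scntX]
  | succ n ih =>
    rw [scntX_succ, ih, Finset.range_add_one, Finset.filter_insert]
    split_ifs with h
    · rw [Finset.card_insert_of_notMem (by simp)]
    · simp

lemma selected_iff (x : ℕ → E12) (k : ℕ) :
    k ∈ selected strat x ↔ (smallX x k ∨ ∀ m, k < m → ¬ smallX x m) := by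
  constructor
  · rintro ⟨N, hkN, hsel⟩
    by_contra hc
    push_neg at hc
    obtain ⟨hns, m, hkm, hsm⟩ := hc
    set n := max N (m + 1) with hn
    have h1 : n ≥ N := le_max_left _ _
    have h2 : m < n := lt_of_lt_of_le (Nat.lt_succ_self m) (le_max_right _ _)
    have hkn : k < n := lt_of_lt_of_le hkN h1
    have := (strat_eval hkn).1 (hsel n h1)
    rcases this with h | h
    · exact hns h
    · exact h m h2 hkm hsm
  · intro hor
    refine ⟨k + 1, Nat.lt_succ_self k, fun n hn => ?_⟩
    have hkn : k < n := hn
    rw [strat_eval hkn]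
    rcases hor with hsm | hall
    · exact Or.inl hsm
    · exact Or.inr fun m _ hkm => hall m hkm

lemma strat_stab (x : ℕ → E12) (k : ℕ) :
    ∃ N, k < N ∧ ∀ n ≥ N, strat (hist x n) k = strat (hist x N) k := by
  by_cases hex : ∃ m, k < m ∧ smallX x m
  · obtain ⟨m, hkm, hsm⟩ := hex
    refine ⟨m + 1, lt_trans hkm (Nat.lt_succ_self m), fun n hn => ?_⟩
    have hval : ∀ n' ≥ m + 1, (strat (hist x n') k = true ↔ smallX x k) := by
      intro n' hn'
      have hkn' : k < n' := lt_of_lt_of_le (lt_trans hkm (Nat.lt_succ_self m)) hn'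
      rw [strat_eval hkn']
      constructor
      · rintro (h | h)
        · exact h
        · exact absurd hsm (h m (lt_of_lt_of_le (Nat.lt_succ_self m) hn') hkm)
      · exact Or.inl
    have h1 := hval n hn
    have h2 := hval (m + 1) (le_refl _)
    cases hb1 : strat (hist x n) k <;> cases hb2 : strat (hist x (m + 1)) k <;>
      simp_all
  · push_neg at hex
    refine ⟨k + 1, Nat.lt_succ_self k, fun n hn => ?_⟩
    have hval : ∀ n' ≥ k + 1, strat (hist x n') k = true := by
      intro n' hn'
      rw [strat_eval (show k < n' from hn')]
      exact Or.inr fun m _ hkm => hex m hkm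
    rw [hval n hn, hval (k + 1) (le_refl _)]

lemma selected_infinite (x : ℕ → E12) : (selected strat x).Infinite := by
  by_cases hinf : {n | smallX x n}.Infinite
  · exact hinf.mono fun k hk => (selected_iff x k).2 (Or.inl hk)
  · rw [Set.not_infinite] at hinf
    obtain ⟨K, hK⟩ := hinf.bddAbove
    have hsub : Set.Ici (K + 1) ⊆ selected strat x := by
      intro k hk
      refine (selected_iff x k).2 (Or.inr fun m hkm hsm => ?_)
      have : m ≤ K := hK hsm
      have : K + 1 ≤ k := hk
      omega
    exact (Set.Ici_infinite (K + 1)).mono hsub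

lemma geo4 (M : ℕ) :
    ∑ t ∈ Finset.range M, ((1 / 4 : ℝ)) ^ (t + 1) = (1 - (1 / 4 : ℝ) ^ M) / 3 := by
  induction M with
  | zero => simp
  | succ M ih => rw [Finset.sum_range_succ, ih, pow_succ]; ring

lemma lam_le_half {x : ℕ → E12} {n : ℕ} (h : smallX x n) : ‖part1 (x n)‖ ≤ 1 / 2 := by
  have h1 : lamv (x n) < (1 / 2 : ℝ) ^ (scntX x n + 1) := h
  have h2 : ((1 : ℝ) / 2) ^ (scntX x n + 1) ≤ (1 / 2 : ℝ) ^ 1 :=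
    pow_le_pow_of_le_one (by norm_num) (by norm_num) (by omega)
  have : lamv (x n) ≤ 1 / 2 := le_of_lt (lt_of_lt_of_le h1 (by simpa using h2))
  exact this

lemma caseA {x : ℕ → E12} (hx : NormBlockSeq x) (hinf : {n | smallX x n}.Infinite)
    {φ : ℕ → ℕ} (hφ : StrictMono φ) (hr : ∀ j, φ j ∈ selected strat x) :
    SeqEquiv (fun j => x (φ j)) (fun i => (lp.single 2 i (1 : ℝ) : Y)) := by
  have hex : ∀ a, ∃ m, a < m ∧ smallX x m := by
    intro a
    by_contra hc
    push_neg at hc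
    refine hinf (Set.Finite.subset (Set.finite_Iic a) fun m hm => ?_)
    by_contra hgt
    exact hc m (by simpa using hgt) hm
  have hsm : ∀ j, smallX x (φ j) := by
    intro j
    rcases (selected_iff x (φ j)).1 (hr j) with h | h
    · exact h
    · obtain ⟨m, ham, hm⟩ := hex (φ j)
      exact absurd hm (h m ham)
  apply seqequiv_l2 hx hφ.injective
  · exact fun j => lam_le_half (hsm j)
  · intro s
    set c : ℕ → ℕ := fun j => scntX x (φ j) with hc
    have hinj : Set.InjOn c ↑s := by
      intro j _ j' _ heq
      by_contra hne
      rcases Nat.lt_or_ge j j' with hlt | hge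
      · exact absurd heq (Nat.ne_of_lt (scntX_lt_of_small (hφ hlt) (hsm j)))
      · have hlt : j' < j := by omega
        exact absurd heq.symm (Nat.ne_of_lt (scntX_lt_of_small (hφ hlt) (hsm j')))
    have hbound : ∀ j ∈ s, ‖part1 (x (φ j))‖ ^ 2 ≤ ((1 / 4 : ℝ)) ^ (c j + 1) := by
      intro j _
      have h1 : (0 : ℝ) ≤ lamv (x (φ j)) := norm_nonneg _
      have h2 : lamv (x (φ j)) ≤ (1 / 2 : ℝ) ^ (c j + 1) := le_of_lt (hsm j)
      have h3 : lamv (x (φ j)) ^ 2 ≤ ((1 / 2 : ℝ) ^ (c j + 1)) ^ 2 :=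
        pow_le_pow_left₀ h1 h2 2
      calc ‖part1 (x (φ j))‖ ^ 2 ≤ ((1 / 2 : ℝ) ^ (c j + 1)) ^ 2 := h3
        _ = ((1 / 4 : ℝ)) ^ (c j + 1) := by
            rw [show (1 / 4 : ℝ) = (1 / 2 : ℝ) ^ 2 by norm_num, ← pow_mul, ← pow_mul,
              mul_comm]
    set M := (s.image c).sup id + 1 with hM
    calc ∑ j ∈ s, ‖part1 (x (φ j))‖ ^ 2
        ≤ ∑ j ∈ s, ((1 / 4 : ℝ)) ^ (c j + 1) := Finset.sum_le_sum hbound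
      _ = ∑ t ∈ s.image c, ((1 / 4 : ℝ)) ^ (t + 1) :=
          (Finset.sum_image (f := fun t : ℕ => ((1 / 4 : ℝ)) ^ (t + 1)) (g := c)
            fun j hj j' hj' h => hinj hj hj' h).symm
      _ ≤ ∑ t ∈ Finset.range M, ((1 / 4 : ℝ)) ^ (t + 1) := by
          apply Finset.sum_le_sum_of_subset_of_nonneg
          · intro t ht
            have := Finset.le_sup (f := id) ht
            simp only [id] at this
            exact Finset.mem_range.2 (by omega)
          · intro t _ _
            positivity
      _ = (1 - (1 / 4 : ℝ) ^ M) / 3 := geo4 M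
      _ ≤ 1 := by
          have : (0 : ℝ) ≤ (1 / 4 : ℝ) ^ M := by positivity
          linarith

lemma caseB {x : ℕ → E12} (hx : NormBlockSeq x) (hfin : {n | smallX x n}.Finite)
    {φ : ℕ → ℕ} (hφ : StrictMono φ) :
    SeqEquiv (fun j => x (φ j)) (fun i => (lp.single 1 i (1 : ℝ) : X)) := by
  classical
  set k := hfin.toFinset.card with hk
  have hscnt_le : ∀ n, scntX x n ≤ k := by
    intro n
    rw [scntX_eq_card, hk]
    apply Finset.card_le_card
    intro m hm
    rw [Finset.mem_filter] at hm
    exact hfin.mem_toFinset.2 hm.2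
  apply seqequiv_l1 hx hφ.injective (fun j => smallX x (φ j)) k
  · exact fun j hj => lam_le_half hj
  · intro j
    by_cases hsj : smallX x (φ j)
    · exact Or.inl hsj
    · right
      have h1 : (1 / 2 : ℝ) ^ (scntX x (φ j) + 1) ≤ lamv (x (φ j)) := not_lt.1 hsj
      have h2 : (1 / 2 : ℝ) ^ (k + 1) ≤ (1 / 2 : ℝ) ^ (scntX x (φ j) + 1) :=
        pow_le_pow_of_le_one (by norm_num) (by norm_num) (by
          have := hscnt_le (φ j); omega)
      exact le_trans h2 h1
  · intro s
    apply Finset.card_le_card_of_injOn (fun j => φ j)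
    · intro j hj
      rw [Finset.mem_coe, Finset.mem_filter] at hj
      exact Finset.mem_coe.2 (hfin.mem_toFinset.2 hj.2)
    · exact fun j _ j' _ h => hφ.injective h

end S15


open Stmt15 in
theorem stmt15 :
    ∃ σ : List E12 → ℕ → Bool, ∀ x : ℕ → E12, NormBlockSeq x →
      -- the digits stabilise at every coordinate
      (∀ k, ∃ N, k < N ∧ ∀ n ≥ N, σ (hist x n) k = σ (hist x N) k) ∧
      -- the eventually selected set is infinite
      (selected σ x).Infinite ∧
      -- and every increasing enumeration of it gives a subsequence equivalent
      -- to the unit vector basis of ℓ₁ or of ℓ₂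
      ∀ φ : ℕ → ℕ, StrictMono φ → (∀ j, φ j ∈ selected σ x) →
        (∀ k ∈ selected σ x, ∃ j, φ j = k) →
        SeqEquiv (fun j => x (φ j))
          (fun i => (lp.single 1 i (1 : ℝ) : lp (fun _ : ℕ => ℝ) 1)) ∨
        SeqEquiv (fun j => x (φ j))
          (fun i => (lp.single 2 i (1 : ℝ) : lp (fun _ : ℕ => ℝ) 2)) := by
  
  refine ⟨S15.strat, fun x hx => ⟨S15.strat_stab x, S15.selected_infinite x, ?_⟩⟩
  intro φ hφ hr _
  by_cases hinf : {n | S15.smallX x n}.Infinite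
  · exact Or.inr (S15.caseA hx hinf hφ hr)
  · exact Or.inl (S15.caseB hx (Set.not_infinite.1 hinf) hφ)
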